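/- Let w₁ᵉ, ..., wₙᵉ be real-valued functions of ε on (0, β) with finite limits Mᵢ = lim_{ε→0⁺} wᵢᵉ, let 𝔐 = max Mᵢ and ℑ = {i : Mᵢ = 𝔐}. Assume for each i ∈ ℑ the limit μᵢ = lim_{ε→0⁺} (wᵢᵉ − 𝔐)/ε exists and is finite, and that D = ∑_{i∈ℑ} γᵢ e^{μᵢ} ≠ 0, where γᵢ are nonzero real constants. Then τ(ε) = ∑ᵢ γᵢ e^(wᵢᵉ/ε) is nonzero for all sufficiently small ε > 0, and lim_{ε→0⁺} ε·ln|τ(ε)| = 𝔐. -/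

import Mathlib

open Filter Real Finset Topology

/-!
Factor out the dominant exponential: `τ ε = exp (𝔐 / ε) * S ε` with
`S ε = ∑ γᵢ exp ((wᵢ ε - 𝔐) / ε)`. Terms with `Mᵢ < 𝔐` vanish in the limit, the others tend to
`γᵢ exp μᵢ`, so `S ε → D ≠ 0`. Hence `ε log |τ ε| = 𝔐 + ε log |S ε|` and `ε log |S ε| → 0`.
-/

lemma tendsto_exp_div_nhdsGT_zero_of_neg {f : ℝ → ℝ} {a : ℝ}
    (hf : Tendsto f (𝓝[>] 0) (𝓝 a)) (ha : a < 0) :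
    Tendsto (fun ε => exp (f ε / ε)) (𝓝[>] 0) (𝓝 0) := by
  have hdiv : Tendsto (fun ε => f ε / ε) (𝓝[>] 0) atBot := by
    simpa only [div_eq_mul_inv] using hf.neg_mul_atTop ha tendsto_inv_nhdsGT_zero
  exact tendsto_exp_atBot.comp hdiv

lemma tendsto_mul_log_abs_nhdsGT_zero {S : ℝ → ℝ} {D : ℝ}
    (hS : Tendsto S (𝓝[>] 0) (𝓝 D)) (hD : D ≠ 0) :
    Tendsto (fun ε => ε * log |S ε|) (𝓝[>] 0) (𝓝 0) := by
  have hlog : Tendsto (fun ε => log |S ε|) (𝓝[>] 0) (𝓝 (log |D|)) :=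
    ((continuousAt_log (abs_ne_zero.2 hD)).tendsto.comp (continuous_abs.tendsto D)).comp hS
  simpa using (tendsto_id.mono_left nhdsWithin_le_nhds).mul hlog

lemma sum_mul_exp_div_eq_exp_mul {ι : Type*} (s : Finset ι) (γ w : ι → ℝ) (m ε : ℝ) :
    ∑ i ∈ s, γ i * exp (w i / ε) = exp (m / ε) * ∑ i ∈ s, γ i * exp ((w i - m) / ε) := by
  rw [mul_sum]
  refine sum_congr rfl fun i _ => ?_
  rw [mul_left_comm, ← exp_add, sub_div, add_sub_cancel]

lemma mul_log_abs_exp_div_mul {m ε x : ℝ} (hε : ε ≠ 0) (hx : x ≠ 0) :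
    ε * log |exp (m / ε) * x| = m + ε * log |x| := by
  rw [abs_mul, abs_of_pos (exp_pos _), log_mul (exp_ne_zero _) (abs_ne_zero.2 hx), log_exp,
    mul_add, mul_div_cancel₀ _ hε]

lemma tendsto_sum_mul_exp_sub_div_of_le {ι : Type*} [Fintype ι] (w : ι → ℝ → ℝ) (M γ μ : ι → ℝ)
    (m : ℝ) (hM : ∀ i, Tendsto (w i) (𝓝[>] 0) (𝓝 (M i))) (hle : ∀ i, M i ≤ m)
    (hμ : ∀ i, M i = m → Tendsto (fun ε => (w i ε - m) / ε) (𝓝[>] 0) (𝓝 (μ i))) :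
    Tendsto (fun ε => ∑ i, γ i * exp ((w i ε - m) / ε)) (𝓝[>] 0)
      (𝓝 (∑ i ∈ univ.filter (fun i => M i = m), γ i * exp (μ i))) := by
  rw [sum_filter]
  refine tendsto_finsetSum _ fun i _ => ?_
  split_ifs with hi
  · exact ((continuous_exp.tendsto _).comp (hμ i hi)).const_mul _
  · have hneg : M i - m < 0 := sub_neg.2 ((hle i).lt_of_ne hi)
    simpa using (tendsto_exp_div_nhdsGT_zero_of_neg ((hM i).sub_const m) hneg).const_mul (γ i)

theorem stmt_3_general (n : ℕ) (w : Fin (n + 1) → ℝ → ℝ) (M : Fin (n + 1) → ℝ)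
    (hM : ∀ i, Tendsto (w i) (nhdsWithin 0 (Set.Ioi 0)) (nhds (M i)))
    (γ : Fin (n + 1) → ℝ)
    (𝔐 : ℝ) (h𝔐 : 𝔐 = Finset.univ.sup' Finset.univ_nonempty M)
    (μ : Fin (n + 1) → ℝ)
    (hμ : ∀ i, M i = 𝔐 →
      Tendsto (fun ε : ℝ => (w i ε - 𝔐) / ε) (nhdsWithin 0 (Set.Ioi 0)) (nhds (μ i)))
    (hD : ∑ i ∈ Finset.univ.filter (fun i => M i = 𝔐), γ i * Real.exp (μ i) ≠ 0) :
    (∀ᶠ ε in nhdsWithin (0 : ℝ) (Set.Ioi 0), ∑ i, γ i * Real.exp (w i ε / ε) ≠ 0) ∧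
    Tendsto (fun ε : ℝ => ε * Real.log |∑ i, γ i * Real.exp (w i ε / ε)|)
      (nhdsWithin 0 (Set.Ioi 0)) (nhds 𝔐) := by
  set S : ℝ → ℝ := fun ε => ∑ i, γ i * exp ((w i ε - 𝔐) / ε)
  have hle : ∀ i, M i ≤ 𝔐 := fun i => h𝔐 ▸ le_sup' M (mem_univ i)
  have hS := tendsto_sum_mul_exp_sub_div_of_le w M γ μ 𝔐 hM hle hμ
  have hSne : ∀ᶠ ε in 𝓝[>] 0, S ε ≠ 0 := hS.eventually_ne hD
  have hfactor : ∀ ε : ℝ, ∑ i, γ i * exp (w i ε / ε) = exp (𝔐 / ε) * S ε :=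
    fun ε => sum_mul_exp_div_eq_exp_mul _ γ (fun i => w i ε) 𝔐 ε
  refine ⟨?_, ?_⟩
  · filter_upwards [hSne] with ε hSε
    rw [hfactor]
    exact mul_ne_zero (exp_ne_zero _) hSε
  · have hlog : ∀ᶠ ε in 𝓝[>] (0 : ℝ),
        𝔐 + ε * log |S ε| = ε * log |∑ i, γ i * exp (w i ε / ε)| := by
      filter_upwards [hSne, self_mem_nhdsWithin] with ε hSε (hε : 0 < ε)
      rw [hfactor, mul_log_abs_exp_div_mul hε.ne' hSε]
    simpa using (tendsto_mul_log_abs_nhdsGT_zero hS hD).const_add 𝔐 |>.congr' hlog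

theorem stmt_3 (n : ℕ) (w : Fin (n + 1) → ℝ → ℝ) (M : Fin (n + 1) → ℝ)
    (hM : ∀ i, Tendsto (w i) (nhdsWithin 0 (Set.Ioi 0)) (nhds (M i)))
    (γ : Fin (n + 1) → ℝ) (hγ : ∀ i, γ i ≠ 0)
    (𝔐 : ℝ) (h𝔐 : 𝔐 = Finset.univ.sup' Finset.univ_nonempty M)
    (μ : Fin (n + 1) → ℝ)
    (hμ : ∀ i, M i = 𝔐 →
      Tendsto (fun ε : ℝ => (w i ε - 𝔐) / ε) (nhdsWithin 0 (Set.Ioi 0)) (nhds (μ i)))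
    (hD : ∑ i ∈ Finset.univ.filter (fun i => M i = 𝔐), γ i * Real.exp (μ i) ≠ 0) :
    (∀ᶠ ε in nhdsWithin (0 : ℝ) (Set.Ioi 0), ∑ i, γ i * Real.exp (w i ε / ε) ≠ 0) ∧
    Tendsto (fun ε : ℝ => ε * Real.log |∑ i, γ i * Real.exp (w i ε / ε)|)
      (nhdsWithin 0 (Set.Ioi 0)) (nhds 𝔐) :=
  stmt_3_general n w M hM γ 𝔐 h𝔐 μ hμ hD
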